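/- arXiv:1608.01510 — 3 statements merged into one kernel-verified Lean document; each statement's English description precedes it below -/
import Mathlib

section
/- Let A be a finite nonempty type, let β¹ and β² be probability distributions on A, and let v : A → ℝ be a function with v_min ≤ v(a) ≤ v_max for all a ∈ A. Then |∑_{a∈A} β¹(a)·v(a) − ∑_{a∈A} β²(a)·v(a)| ≤ ((v_max − v_min)/2) · ∑_{a∈A} |β¹(a) − β²(a)|. -/
/-! Since both distributions have total mass one, the difference `β₁ - β₂` has total mass zero, so
the expected values do not change when `v` is shifted by the midpoint `c` of `[vmin, vmax]`;
after the shift `|v - c| ≤ (vmax - vmin) / 2`, and the triangle inequality finishes the proof. -/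

open Finset

theorem abs_sub_midpoint_le_half_range {x m M : ℝ} (hm : m ≤ x) (hM : x ≤ M) :
    |x - (m + M) / 2| ≤ (M - m) / 2 := by
  rw [abs_le]
  constructor <;> linarith

theorem Finset.abs_sum_mul_le_half_range_mul_sum_abs {ι : Type*} (s : Finset ι) (w v : ι → ℝ)
    {m M : ℝ} (hw : ∑ i ∈ s, w i = 0) (hm : ∀ i ∈ s, m ≤ v i) (hM : ∀ i ∈ s, v i ≤ M) :
    |∑ i ∈ s, w i * v i| ≤ (M - m) / 2 * ∑ i ∈ s, |w i| := by
  set c := (m + M) / 2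
  have hshift : ∑ i ∈ s, w i * v i = ∑ i ∈ s, w i * (v i - c) := by
    simp only [mul_sub, sum_sub_distrib, ← sum_mul, hw, zero_mul, sub_zero]
  calc |∑ i ∈ s, w i * v i|
      ≤ ∑ i ∈ s, |w i| * |v i - c| := by
        rw [hshift]
        simpa only [abs_mul] using abs_sum_le_sum_abs (fun i => w i * (v i - c)) s
    _ ≤ ∑ i ∈ s, |w i| * ((M - m) / 2) := by
        gcongr with i hi
        exact abs_sub_midpoint_le_half_range (hm i hi) (hM i hi)
    _ = (M - m) / 2 * ∑ i ∈ s, |w i| := by rw [← sum_mul, mul_comm]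

theorem stmt_0_general {A : Type*} [Fintype A]
    (β₁ β₂ v : A → ℝ) (vmin vmax : ℝ)
    (hβ₁1 : ∑ a, β₁ a = 1)
    (hβ₂1 : ∑ a, β₂ a = 1)
    (hvmin : ∀ a, vmin ≤ v a) (hvmax : ∀ a, v a ≤ vmax) :
    |(∑ a, β₁ a * v a) - ∑ a, β₂ a * v a| ≤
      ((vmax - vmin) / 2) * ∑ a, |β₁ a - β₂ a| := by
  have hmass : ∑ a, (β₁ a - β₂ a) = 0 := by rw [sum_sub_distrib, hβ₁1, hβ₂1, sub_self]
  rw [← sum_sub_distrib]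
  simp only [← sub_mul]
  exact abs_sum_mul_le_half_range_mul_sum_abs univ _ v hmass
    (fun a _ => hvmin a) (fun a _ => hvmax a)

/-- Per-information-set value bound (Lemma 3 of the appendix): changing a
probability distribution from `β₁` to `β₂` changes the expected value of a
bounded function `v` by at most half the range of `v` times the L1 distance. -/
theorem stmt_0 {A : Type*} [Fintype A] [Nonempty A]
    (β₁ β₂ v : A → ℝ) (vmin vmax : ℝ)
    (hβ₁0 : ∀ a, 0 ≤ β₁ a) (hβ₁1 : ∑ a, β₁ a = 1)
    (hβ₂0 : ∀ a, 0 ≤ β₂ a) (hβ₂1 : ∑ a, β₂ a = 1)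
    (hvmin : ∀ a, vmin ≤ v a) (hvmax : ∀ a, v a ≤ vmax) :
    |(∑ a, β₁ a * v a) - ∑ a, β₂ a * v a| ≤
      ((vmax - vmin) / 2) * ∑ a, |β₁ a - β₂ a| :=
  stmt_0_general β₁ β₂ v vmin vmax hβ₁1 hβ₂1 hvmin hvmax
end

section
/- Let P be a natural number, set δ = 10^{−P}, and let b, c, c_L, c_U be real numbers with 0 ≤ b ≤ 1 and c_L ≤ c ≤ c_U. Then there exist real numbers b̲, Δb, Δa such that: 10^{P}·b̲ is an integer; 0 ≤ b̲; b = b̲ + Δb; 0 ≤ Δb ≤ δ; b·c = b̲·c + Δa; c_L·Δb ≤ Δa ≤ c_U·Δb; (c − c_U)·δ + c_U·Δb ≤ Δa; and Δa ≤ (c − c_L)·δ + c_L·Δb. -/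
/-!
Truncate `b` to `P` decimal digits, `b̲ = ⌊10^P b⌋ / 10^P`, so that the residual `Δb = b - b̲`
lies in `[0, 10^{-P}]`, and take `Δa = c Δb`. The four MILP inequalities on `Δa` are then the
McCormick envelope of the product `c · Δb` over `[c_L, c_U] × [0, 10^{-P}]`, which every exact
product satisfies because each McCormick inequality is the product of two nonnegative distances
to the bounds.
-/

section McCormick

variable {α : Type*} [CommRing α] [PartialOrder α] [IsOrderedRing α]

def McCormickEnvelope (xL xU yL yU x y w : α) : Prop :=
  xL * y + x * yL - xL * yL ≤ w ∧ xU * y + x * yU - xU * yU ≤ w ∧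
    w ≤ xU * y + x * yL - xU * yL ∧ w ≤ xL * y + x * yU - xL * yU

theorem mcCormickEnvelope_mul {xL xU yL yU x y : α} (hxL : xL ≤ x) (hxU : x ≤ xU)
    (hyL : yL ≤ y) (hyU : y ≤ yU) : McCormickEnvelope xL xU yL yU x y (x * y) := by
  have hLL := mul_nonneg (sub_nonneg.2 hxL) (sub_nonneg.2 hyL)
  have hUU := mul_nonneg (sub_nonneg.2 hxU) (sub_nonneg.2 hyU)
  have hUL := mul_nonneg (sub_nonneg.2 hxU) (sub_nonneg.2 hyL)
  have hLU := mul_nonneg (sub_nonneg.2 hxL) (sub_nonneg.2 hyU)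
  exact ⟨by linear_combination hLL, by linear_combination hUU, by linear_combination hUL,
    by linear_combination hLU⟩

end McCormick

section Truncation

variable {α : Type*} [Field α] [LinearOrder α] [FloorRing α]

def truncate (t b : α) : α := ⌊t * b⌋ / t

theorem mul_truncate {t : α} (ht : 0 < t) (b : α) : t * truncate t b = ⌊t * b⌋ := by
  rw [truncate, mul_div_cancel₀ _ ht.ne']

variable [IsStrictOrderedRing α]

theorem truncate_nonneg {t b : α} (ht : 0 < t) (hb : 0 ≤ b) : 0 ≤ truncate t b :=
  div_nonneg (Int.cast_nonneg (Int.floor_nonneg.2 (mul_nonneg ht.le hb))) ht.le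

theorem truncate_le {t : α} (ht : 0 < t) (b : α) : truncate t b ≤ b :=
  (div_le_iff₀' ht).2 (Int.floor_le _)

theorem sub_truncate_le {t : α} (ht : 0 < t) (b : α) : b - truncate t b ≤ t⁻¹ := by
  rw [sub_le_iff_le_add, truncate, inv_eq_one_div, ← add_div, le_div_iff₀' ht]
  linarith [Int.lt_floor_add_one (t * b)]

end Truncation

theorem stmt_8_general (P : ℕ) (b c cL cU : ℝ)
    (hb0 : 0 ≤ b) (hcL : cL ≤ c) (hcU : c ≤ cU) :
    ∃ bLow Δb Δa : ℝ,
      (∃ n : ℤ, (10 : ℝ) ^ P * bLow = (n : ℝ)) ∧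
      0 ≤ bLow ∧
      b = bLow + Δb ∧
      0 ≤ Δb ∧ Δb ≤ (10 : ℝ) ^ (-(P : ℤ)) ∧
      b * c = bLow * c + Δa ∧
      cL * Δb ≤ Δa ∧ Δa ≤ cU * Δb ∧
      (c - cU) * (10 : ℝ) ^ (-(P : ℤ)) + cU * Δb ≤ Δa ∧
      Δa ≤ (c - cL) * (10 : ℝ) ^ (-(P : ℤ)) + cL * Δb := by
  have ht : (0 : ℝ) < 10 ^ P := by positivity
  have hδ : (10 : ℝ) ^ (-(P : ℤ)) = ((10 : ℝ) ^ P)⁻¹ := by rw [zpow_neg, zpow_natCast]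
  set bLow := truncate ((10 : ℝ) ^ P) b
  have hΔb0 : 0 ≤ b - bLow := sub_nonneg.2 (truncate_le ht b)
  have hΔb1 : b - bLow ≤ (10 : ℝ) ^ (-(P : ℤ)) := hδ ▸ sub_truncate_le ht b
  obtain ⟨h₁, h₂, h₃, h₄⟩ := mcCormickEnvelope_mul hcL hcU hΔb0 hΔb1
  refine ⟨bLow, b - bLow, c * (b - bLow), ⟨_, mul_truncate ht b⟩, truncate_nonneg ht hb0,
    by ring, hΔb0, hΔb1, by ring, ?_, ?_, ?_, ?_⟩ <;> linarith

/-- Soundness of the MDT upper-bound reformulation: any exact solution of the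
bilinear term `b·c` with `b ∈ [0,1]` and `c ∈ [c_L, c_U]` remains feasible for
the relaxed constraints of the Upper Bound MILP. -/
theorem stmt_8 (P : ℕ) (b c cL cU : ℝ)
    (hb0 : 0 ≤ b) (hb1 : b ≤ 1) (hcL : cL ≤ c) (hcU : c ≤ cU) :
    ∃ bLow Δb Δa : ℝ,
      (∃ n : ℤ, (10 : ℝ) ^ P * bLow = (n : ℝ)) ∧
      0 ≤ bLow ∧
      b = bLow + Δb ∧
      0 ≤ Δb ∧ Δb ≤ (10 : ℝ) ^ (-(P : ℤ)) ∧
      b * c = bLow * c + Δa ∧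
      cL * Δb ≤ Δa ∧ Δa ≤ cU * Δb ∧
      (c - cU) * (10 : ℝ) ^ (-(P : ℤ)) + cU * Δb ≤ Δa ∧
      Δa ≤ (c - cL) * (10 : ℝ) ^ (-(P : ℤ)) + cL * Δb :=
  stmt_8_general P b c cL cU hb0 hcL hcU
end

section
/- Let I be a finite type and for each i ∈ I let A_i be a finite nonempty type. Let f : (Π i, (A_i → ℝ)) → ℝ be affine in each coordinate block, i.e., for every i ∈ I, every β : Π i, (A_i → ℝ), every t, t' : A_i → ℝ and every s ∈ ℝ, f(update β i (s·t + (1−s)·t')) = s·f(update β i t) + (1−s)·f(update β i t'). Then for every β such that β_i is a probability distribution on A_i for each i, there exists a pure profile a : Π i, A_i such that f(β) ≤ f(δ_a), where δ_a assigns to each i the point distribution putting probability 1 on a_i. -/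
/-!
Since every `Aᵢ`-block of `f` is affine, `f` is in particular convex on each simplex when the
other blocks are frozen. By the maximum principle for convex functions, a convex function on the
simplex is dominated at some vertex, i.e. at a Dirac distribution. Replacing the blocks of `β` by
Dirac distributions one at a time therefore never decreases `f`, and after all blocks are
replaced the profile is pure.
-/

open Finset Function

section Convexity

variable {𝕜 : Type*} [Field 𝕜] [LinearOrder 𝕜] [IsStrictOrderedRing 𝕜]

lemma nonempty_of_mem_stdSimplex {α : Type*} [Fintype α] {w : α → 𝕜}
    (hw : w ∈ stdSimplex 𝕜 α) : Nonempty α :=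
  univ_nonempty_iff.1 <| nonempty_of_sum_ne_zero <| hw.2 ▸ one_ne_zero

lemma ConvexOn.exists_single_ge_of_mem_stdSimplex {α : Type*} [Fintype α] [DecidableEq α]
    {g : (α → 𝕜) → 𝕜} (hg : ConvexOn 𝕜 (stdSimplex 𝕜 α) g) {w : α → 𝕜}
    (hw : w ∈ stdSimplex 𝕜 α) : ∃ a, g w ≤ g (Pi.single a 1) := by
  rw [← convexHull_rangle_single_eq_stdSimplex] at hw
  obtain ⟨_, ⟨a, rfl⟩, hle⟩ :=
    hg.exists_ge_of_mem_convexHull (Set.range_subset_iff.2 (single_mem_stdSimplex 𝕜)) hw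
  exact ⟨a, hle⟩

section Blocks

variable {I : Type*} [DecidableEq I] {A : I → Type*} [∀ i, Fintype (A i)] [∀ i, DecidableEq (A i)]

lemma exists_update_single_ge {f : (∀ i, A i → 𝕜) → 𝕜}
    (hf : ∀ i β, ConvexOn 𝕜 (stdSimplex 𝕜 (A i)) fun t ↦ f (update β i t))
    (i : I) {β : ∀ i, A i → 𝕜} (hβ : β i ∈ stdSimplex 𝕜 (A i)) :
    ∃ b, f β ≤ f (update β i (Pi.single b 1)) := by
  simpa only [update_eq_self] using (hf i β).exists_single_ge_of_mem_stdSimplex hβ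

lemma exists_pure_ge_of_convexOn_update [Fintype I] {f : (∀ i, A i → 𝕜) → 𝕜}
    (hf : ∀ i β, ConvexOn 𝕜 (stdSimplex 𝕜 (A i)) fun t ↦ f (update β i t))
    {β : ∀ i, A i → 𝕜} (hβ : ∀ i, β i ∈ stdSimplex 𝕜 (A i)) :
    ∃ a : ∀ i, A i, f β ≤ f fun i ↦ Pi.single (a i) 1 := by
  suffices h : ∀ s : Finset I, ∃ a : ∀ i, A i,
      f β ≤ f (s.piecewise (fun i ↦ Pi.single (a i) 1) β) by
    simpa using h univ
  intro s
  induction s using Finset.induction_on with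
  | empty => exact ⟨fun i ↦ (nonempty_of_mem_stdSimplex (hβ i)).some, by simp⟩
  | @insert i s hi ih =>
    obtain ⟨a, ha⟩ := ih
    have hβi : s.piecewise (fun i ↦ Pi.single (a i) 1) β i ∈ stdSimplex 𝕜 (A i) :=
      (piecewise_eq_of_notMem _ _ _ hi).symm ▸ hβ i
    obtain ⟨b, hb⟩ := exists_update_single_ge hf i hβi
    refine ⟨update a i b, ha.trans (hb.trans_eq ?_)⟩
    rw [piecewise_insert, update_self]
    congr 2
    exact piecewise_congr s (fun j hj ↦ by rw [update_of_ne (ne_of_mem_of_not_mem hj hi)])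
      fun _ _ ↦ rfl

end Blocks

lemma convexOn_univ_of_map_add_smul {E : Type*} [AddCommGroup E] [Module 𝕜 E] {g : E → 𝕜}
    (hg : ∀ x y (s : 𝕜), g (s • x + (1 - s) • y) = s * g x + (1 - s) * g y) :
    ConvexOn 𝕜 Set.univ g := by
  refine ⟨convex_univ, fun x _ y _ a b _ _ hab ↦ ?_⟩
  obtain rfl : b = 1 - a := by linear_combination hab
  exact (hg x y a).le

end Convexity

theorem stmt_9_general {I : Type*} [Fintype I] [DecidableEq I]
    {A : I → Type*} [∀ i, Fintype (A i)]
    [∀ i, DecidableEq (A i)]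
    (f : (∀ i, A i → ℝ) → ℝ)
    (haff : ∀ (i : I) (β : ∀ i, A i → ℝ) (t t' : A i → ℝ) (s : ℝ),
      f (Function.update β i (fun a => s * t a + (1 - s) * t' a)) =
        s * f (Function.update β i t) + (1 - s) * f (Function.update β i t'))
    (β : ∀ i, A i → ℝ)
    (hβ0 : ∀ i a, 0 ≤ β i a) (hβ1 : ∀ i, ∑ a, β i a = 1) :
    ∃ a : ∀ i, A i,
      f β ≤ f (fun i b => if b = a i then (1 : ℝ) else 0) := by
  have hconvex : ∀ i β, ConvexOn ℝ (stdSimplex ℝ (A i)) fun t ↦ f (update β i t) :=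
    fun i β ↦ (convexOn_univ_of_map_add_smul (haff i β)).subset (Set.subset_univ _)
      (convex_stdSimplex ℝ _)
  obtain ⟨a, ha⟩ := exists_pure_ge_of_convexOn_update hconvex fun i ↦ ⟨hβ0 i, hβ1 i⟩
  exact ⟨a, by simpa only [← Pi.single_apply] using ha⟩

/-- Core of Lemma 1: a function that is affine in each coordinate block over a
product of probability simplices is weakly maximized, compared to any profile
of probability distributions, at some pure (Dirac) profile. -/
theorem stmt_9 {I : Type*} [Fintype I] [DecidableEq I]
    {A : I → Type*} [∀ i, Fintype (A i)] [∀ i, Nonempty (A i)]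
    [∀ i, DecidableEq (A i)]
    (f : (∀ i, A i → ℝ) → ℝ)
    (haff : ∀ (i : I) (β : ∀ i, A i → ℝ) (t t' : A i → ℝ) (s : ℝ),
      f (Function.update β i (fun a => s * t a + (1 - s) * t' a)) =
        s * f (Function.update β i t) + (1 - s) * f (Function.update β i t'))
    (β : ∀ i, A i → ℝ)
    (hβ0 : ∀ i a, 0 ≤ β i a) (hβ1 : ∀ i, ∑ a, β i a = 1) :
    ∃ a : ∀ i, A i,
      f β ≤ f (fun i b => if b = a i then (1 : ℝ) else 0) :=
  stmt_9_general f haff β hβ0 hβ1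
end
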